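/- arXiv:1902.08668 — 3 statements merged into one kernel-verified Lean document; each statement's English description precedes it below -/
import Mathlib

section
/- For any real numbers 0 ≤ S ≤ T and any a ∈ [0,1], one has T^{a+1} - S^{a+1} ≤ (T + S)·(T - S)^a. -/
/-!
Write `T ^ (a + 1) = T * T ^ a`. Subadditivity of `x ↦ x ^ a` gives `S * T ^ a ≤ S * (T - S) ^ a + S * S ^ a`,
and monotonicity of `x ↦ x ^ (1 - a)` gives `(T - S) * T ^ a ≤ T * (T - S) ^ a`; adding the two is the claim.
-/

namespace Real

lemma mul_rpow_le_mul_rpow_of_le {u x a : ℝ} (hu : 0 ≤ u) (hux : u ≤ x) (ha : a ≤ 1) :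
    u * x ^ a ≤ x * u ^ a := by
  rcases hu.eq_or_lt with rfl | hu
  · rw [zero_mul]
    exact mul_nonneg hux (rpow_nonneg le_rfl a)
  have hx : 0 < x := hu.trans_le hux
  have hpow : u ^ (1 - a) ≤ x ^ (1 - a) := rpow_le_rpow hu.le hux (sub_nonneg.2 ha)
  rw [rpow_sub hu, rpow_sub hx, rpow_one, rpow_one,
    div_le_div_iff₀ (rpow_pos_of_pos hu a) (rpow_pos_of_pos hx a)] at hpow
  exact hpow

end Real

theorem power_difference_bound (S T a : ℝ) (hS : 0 ≤ S) (hST : S ≤ T)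
    (ha0 : 0 ≤ a) (ha1 : a ≤ 1) :
    T ^ (a + 1) - S ^ (a + 1) ≤ (T + S) * (T - S) ^ a := by
  have hTS : 0 ≤ T - S := sub_nonneg.2 hST
  have hsubadd : T ^ a ≤ (T - S) ^ a + S ^ a := by
    simpa using Real.rpow_add_le_add_rpow hTS hS ha0 ha1
  have hmono : (T - S) * T ^ a ≤ T * (T - S) ^ a :=
    Real.mul_rpow_le_mul_rpow_of_le hTS (sub_le_self T hS) ha1
  have ha : a + 1 ≠ 0 := by positivity
  rw [Real.rpow_add_one' (hS.trans hST) ha, Real.rpow_add_one' hS ha]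
  linear_combination hmono + S * hsubadd
end

section
/- Let γ > 0, σ ∈ (0, 1/γ], integers 0 ≤ S ≤ T-1 with S ≤ ((K-1)/(K+1))·T for some K ≥ 1, and u ∈ [0,1]. Then σ^u · G_{S,T}(σ) ≤ K · γ^{1-u} · (T - S)^{1-u}, where G_{S,T}(σ) = (1/(T-S)) ∑_{t=S+1}^T σ^{-1}(1-(1-γσ)^t). -/
/-!
Each term `g_t(σ) = σ⁻¹ (1 - (1 - γσ)^t)` of the average obeys
`σ^u g_t(σ) ≤ (γt)^{1-u} ≤ (γT)^{1-u}`: the quantity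
`1 - (1 - γσ)^t` lies in `[0, 1]` and, by Bernoulli's inequality, is at most `γσt`, so it is
at most `(γσt)^{1-u}`. Hence so is the average, and the tail condition, which is equivalent to
`T + S ≤ K (T - S)`, gives `(γT)^{1-u} ≤ (K γ (T - S))^{1-u} ≤ K (γ (T - S))^{1-u}`.
-/

open Finset
open scoped BigOperators

namespace TailAveragedGD

lemma one_sub_one_sub_pow_mem_Icc {x : ℝ} (hx0 : 0 ≤ x) (hx1 : x ≤ 1) (t : ℕ) :
    1 - (1 - x) ^ t ∈ Set.Icc 0 1 := by
  have h0 : 0 ≤ (1 - x) ^ t := pow_nonneg (by linarith) t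
  have h1 : (1 - x) ^ t ≤ 1 := pow_le_one₀ (by linarith) (by linarith)
  exact ⟨by linarith, by linarith⟩

lemma one_sub_one_sub_pow_le_mul {x : ℝ} (hx : x ≤ 2) (t : ℕ) :
    1 - (1 - x) ^ t ≤ t * x := by
  have := one_add_mul_le_pow (a := -x) (by linarith) t
  rw [← sub_eq_add_neg] at this
  linarith

lemma le_rpow_of_le_of_le_one {a b θ : ℝ} (ha : a ∈ Set.Icc 0 1) (hab : a ≤ b)
    (hθ0 : 0 ≤ θ) (hθ1 : θ ≤ 1) : a ≤ b ^ θ :=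
  (Real.self_le_rpow_of_le_one ha.1 ha.2 hθ1).trans (Real.rpow_le_rpow ha.1 hab hθ0)

lemma rpow_le_mul_rpow_of_le_mul {x y K θ : ℝ} (hx : 0 ≤ x) (hy : 0 ≤ y) (hK : 1 ≤ K)
    (hxy : x ≤ K * y) (hθ0 : 0 ≤ θ) (hθ1 : θ ≤ 1) : x ^ θ ≤ K * y ^ θ :=
  calc x ^ θ ≤ (K * y) ^ θ := Real.rpow_le_rpow hx hxy hθ0
    _ = K ^ θ * y ^ θ := Real.mul_rpow (by linarith) hy
    _ ≤ K * y ^ θ := by gcongr; exact Real.rpow_le_self_of_one_le hK hθ1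

lemma rpow_mul_gdFilter_le {γ σ u : ℝ} (hγ : 0 ≤ γ) (hσ : 0 < σ) (hγσ : γ * σ ≤ 1)
    (hu0 : 0 ≤ u) (hu1 : u ≤ 1) (t : ℕ) :
    σ ^ u * (σ⁻¹ * (1 - (1 - γ * σ) ^ t)) ≤ (γ * t) ^ (1 - u) := by
  have hmem := one_sub_one_sub_pow_mem_Icc (by positivity) hγσ t
  have hle : 1 - (1 - γ * σ) ^ t ≤ (γ * t * σ) ^ (1 - u) :=
    le_rpow_of_le_of_le_one hmem
      ((one_sub_one_sub_pow_le_mul (by linarith) t).trans_eq (by ring))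
      (by linarith) (by linarith)
  have hσu : σ ^ u * σ ^ (1 - u) = σ := by rw [← Real.rpow_add hσ]; norm_num
  calc σ ^ u * (σ⁻¹ * (1 - (1 - γ * σ) ^ t))
      ≤ σ ^ u * (σ⁻¹ * (γ * t * σ) ^ (1 - u)) := by gcongr
    _ = (γ * t) ^ (1 - u) * (σ ^ u * σ ^ (1 - u)) * σ⁻¹ := by
      rw [Real.mul_rpow (by positivity) hσ.le]; ring
    _ = (γ * t) ^ (1 - u) := by rw [hσu, mul_inv_cancel_right₀ hσ.ne']

lemma le_div_mul_iff_add_le_mul_sub {S T K : ℝ} (hK : 0 < K + 1) :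
    S ≤ (K - 1) / (K + 1) * T ↔ T + S ≤ K * (T - S) := by
  rw [div_mul_eq_mul_div, le_div_iff₀ hK]
  constructor <;> intro h <;> linarith

end TailAveragedGD

open TailAveragedGD in
theorem tail_averaged_filter_power_bound (γ σ : ℝ) (hγ : 0 < γ) (hσ : 0 < σ)
    (hγσ : γ * σ ≤ 1) (S T : ℕ) (hST : S + 1 ≤ T) (K : ℝ) (hK : 1 ≤ K)
    (hSK : (S : ℝ) ≤ (K - 1) / (K + 1) * T) (u : ℝ) (hu0 : 0 ≤ u) (hu1 : u ≤ 1) :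
    σ ^ u * ((1 / ((T : ℝ) - S)) *
        ∑ t ∈ Finset.Icc (S + 1) T, σ⁻¹ * (1 - (1 - γ * σ) ^ t)) ≤
      K * γ ^ (1 - u) * ((T : ℝ) - S) ^ (1 - u) := by
  have hTS : 0 < (T : ℝ) - S := by
    have : (S : ℝ) + 1 ≤ T := by exact_mod_cast hST
    linarith
  have hcard : (#(Icc (S + 1) T) : ℝ) = T - S := by
    rw [Nat.card_Icc, Nat.cast_sub (by omega)]; push_cast; ring
  have hterm : ∀ t ∈ Icc (S + 1) T,
      σ ^ u * (σ⁻¹ * (1 - (1 - γ * σ) ^ t)) ≤ (γ * T) ^ (1 - u) :=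
    fun t ht => (rpow_mul_gdFilter_le hγ.le hσ hγσ hu0 hu1 t).trans <|
      Real.rpow_le_rpow (by positivity)
        (by gcongr; exact_mod_cast (mem_Icc.1 ht).2) (by linarith)
  have hTK : γ * T ≤ K * (γ * (T - S)) := by
    have hT : (T : ℝ) ≤ K * (T - S) := by
      linarith [(le_div_mul_iff_add_le_mul_sub (by linarith)).1 hSK, S.cast_nonneg (α := ℝ)]
    calc γ * T ≤ γ * (K * (T - S)) := by gcongr
      _ = K * (γ * (T - S)) := by ring
  calc σ ^ u * ((1 / ((T : ℝ) - S)) * ∑ t ∈ Icc (S + 1) T, σ⁻¹ * (1 - (1 - γ * σ) ^ t))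
      = 𝔼 t ∈ Icc (S + 1) T, σ ^ u * (σ⁻¹ * (1 - (1 - γ * σ) ^ t)) := by
        rw [expect_eq_sum_div_card, hcard, mul_sum, mul_sum, sum_div]
        exact sum_congr rfl fun t _ => by ring
    _ ≤ (γ * T) ^ (1 - u) := expect_le ⟨T, by simp [hST]⟩ hterm
    _ ≤ K * (γ * (T - S)) ^ (1 - u) :=
        rpow_le_mul_rpow_of_le_mul (by positivity) (mul_pos hγ hTS).le hK hTK
          (by linarith) (by linarith)
    _ = K * γ ^ (1 - u) * ((T : ℝ) - S) ^ (1 - u) := by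
        rw [Real.mul_rpow hγ.le hTS.le]; ring
end

section
/- Let H be a bounded self-adjoint positive semidefinite operator on a separable Hilbert space with eigenvalues (σ_j) and let α ∈ (0,1], u ∈ [0, 1+α], γ > 0 with γ‖H‖ ≤ 1, and L ≥ 1 an integer. Then Tr[H^{u-1}(I - (I-γH)^L)^2] ≤ γ^{1-u+α} · Tr[H^α] · L^{1-u+α}, where H^{-β} is interpreted via spectral calculus on the range of H. -/
/-!
Everything reduces to a pointwise inequality in each eigenvalue `s = σ j`. With `x = γ s ∈ [0, 1]`
and `t = 1 - (1 - x) ^ L ∈ [0, 1]`, Bernoulli's inequality gives `t ≤ L x`, and for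
`e = 1 - u + α ∈ [0, 2]` we get `t ^ 2 ≤ t ^ e ≤ (L x) ^ e`; multiplying by `s ^ (u - 1)` leaves
`γ ^ e L ^ e s ^ α`, which is summed against the summable family `σ j ^ α`.
-/

open Real

lemma one_sub_one_sub_pow_le_mul {R : Type*} [CommRing R] [LinearOrder R] [IsStrictOrderedRing R]
    {x : R} (hx : x ≤ 2) (n : ℕ) : 1 - (1 - x) ^ n ≤ n * x := by
  have := one_add_mul_le_pow (a := -x) (by linarith) n
  rw [← sub_eq_add_neg, mul_neg] at this
  linarith

lemma sq_le_rpow_of_le {t b e : ℝ} (ht0 : 0 ≤ t) (ht1 : t ≤ 1) (htb : t ≤ b) (he0 : 0 ≤ e)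
    (he2 : e ≤ 2) : t ^ 2 ≤ b ^ e :=
  calc t ^ 2 = t ^ (2 : ℝ) := (rpow_two t).symm
    _ ≤ t ^ e := rpow_le_rpow_of_exponent_ge' ht0 ht1 he0 he2
    _ ≤ b ^ e := rpow_le_rpow ht0 htb he0

lemma rpow_mul_one_sub_one_sub_pow_sq_le {γ α u s : ℝ} (hγ : 0 ≤ γ) (hs : 0 ≤ s)
    (hγs : γ * s ≤ 1) (hu : u ≤ 1 + α) (hα : α ≤ 1 + u) (L : ℕ) :
    s ^ (u - 1) * (1 - (1 - γ * s) ^ L) ^ 2 ≤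
      γ ^ (1 - u + α) * (L : ℝ) ^ (1 - u + α) * s ^ α := by
  rcases hs.eq_or_lt with rfl | hs
  · simp only [mul_zero, sub_zero, one_pow, sub_self, zero_pow two_ne_zero, mul_zero]
    positivity
  have hx : 0 ≤ γ * s := mul_nonneg hγ hs.le
  have ht0 : 0 ≤ 1 - (1 - γ * s) ^ L := sub_nonneg.2 (pow_le_one₀ (by linarith) (by linarith))
  have ht1 : 1 - (1 - γ * s) ^ L ≤ 1 := by
    have := pow_nonneg (sub_nonneg.2 hγs) L
    linarith
  have hsq := sq_le_rpow_of_le ht0 ht1 (one_sub_one_sub_pow_le_mul (by linarith) L)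
    (by linarith : 0 ≤ 1 - u + α) (by linarith : 1 - u + α ≤ 2)
  calc s ^ (u - 1) * (1 - (1 - γ * s) ^ L) ^ 2
      ≤ s ^ (u - 1) * ((L : ℝ) * (γ * s)) ^ (1 - u + α) := by gcongr
    _ = γ ^ (1 - u + α) * (L : ℝ) ^ (1 - u + α) * (s ^ (u - 1) * s ^ (1 - u + α)) := by
      rw [mul_rpow L.cast_nonneg hx, mul_rpow hγ hs.le]
      ring
    _ = γ ^ (1 - u + α) * (L : ℝ) ^ (1 - u + α) * s ^ α := by
      rw [← rpow_add hs]
      ring_nf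

theorem trace_power_residual_bound_general (γ α u : ℝ) (hγ : 0 < γ)
    (hα1 : α ≤ 1) (hu0 : 0 ≤ u) (hu1 : u ≤ 1 + α)
    (σ : ℕ → ℝ) (hσ0 : ∀ j, 0 ≤ σ j) (hσ1 : ∀ j, γ * σ j ≤ 1)
    (L : ℕ) (hsum : Summable fun j => σ j ^ α) :
    ∑' j : ℕ, σ j ^ (u - 1) * (1 - (1 - γ * σ j) ^ L) ^ 2 ≤
      γ ^ (1 - u + α) * (∑' j : ℕ, σ j ^ α) * (L : ℝ) ^ (1 - u + α) := by
  have hbound j := rpow_mul_one_sub_one_sub_pow_sq_le hγ.le (hσ0 j) (hσ1 j) hu1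
    (by linarith : α ≤ 1 + u) L
  have hnonneg j : 0 ≤ σ j ^ (u - 1) * (1 - (1 - γ * σ j) ^ L) ^ 2 :=
    mul_nonneg (rpow_nonneg (hσ0 j) _) (sq_nonneg _)
  have hmajorant := hsum.mul_left (γ ^ (1 - u + α) * (L : ℝ) ^ (1 - u + α))
  calc ∑' j : ℕ, σ j ^ (u - 1) * (1 - (1 - γ * σ j) ^ L) ^ 2
      ≤ ∑' j, γ ^ (1 - u + α) * (L : ℝ) ^ (1 - u + α) * σ j ^ α :=
        (hmajorant.of_nonneg_of_le hnonneg hbound).tsum_le_tsum hbound hmajorant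
    _ = γ ^ (1 - u + α) * (∑' j : ℕ, σ j ^ α) * (L : ℝ) ^ (1 - u + α) := by
      rw [tsum_mul_left]
      ring

theorem trace_power_residual_bound (γ α u : ℝ) (hγ : 0 < γ)
    (hα0 : 0 < α) (hα1 : α ≤ 1) (hu0 : 0 ≤ u) (hu1 : u ≤ 1 + α)
    (σ : ℕ → ℝ) (hσ0 : ∀ j, 0 ≤ σ j) (hσ1 : ∀ j, γ * σ j ≤ 1)
    (L : ℕ) (hL : 1 ≤ L) (hsum : Summable fun j => σ j ^ α) :
    ∑' j : ℕ, σ j ^ (u - 1) * (1 - (1 - γ * σ j) ^ L) ^ 2 ≤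
      γ ^ (1 - u + α) * (∑' j : ℕ, σ j ^ α) * (L : ℝ) ^ (1 - u + α) :=
  trace_power_residual_bound_general γ α u hγ hα1 hu0 hu1 σ hσ0 hσ1 L hsum
end
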